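/- arXiv:1311.3726 — 2 statements merged into one kernel-verified Lean document; each statement's English description precedes it below -/
import Mathlib

section
/- Let p ∈ ℝ[x] with deg p ≤ d. For every feasible point z of program (lw) for p, the polynomial p − p(0) + v(z) is a sum of squares of binomials in ℝ[x] (i.e., a sum of squares of polynomials each having at most two terms); in particular p(x̄) ≥ p(0) − v(z) for all x̄ ∈ ℝⁿ, and hence p_gp = p(0) − ρ(p) is a lower bound for p on ℝⁿ. -/
/-!
Split `p − p(0)` into the pure powers `p_{d,i} x_i^d`, the terms of `Ω(p)` that are squares of
monomials, and the terms `p_α x^α`, `α ∈ Δ(p)`. Each `α ∈ Δ(p)` borrows `z_{α,i} x_i^d` from the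
pure powers, and `p_α x^α + ∑_i z_{α,i} x_i^d + v_α(z)` is the weighted AM–GM inequality
`∑_j β_j v_j^d ≥ d ∏_j v_j^{β_j}` for the monomials `v_i = b_i x_i` (weights `α_i`) and a constant
`v_0 = t` (weight `d − |α|`): the constraints of (lw) say exactly that `b` and `t` can be chosen
with `α_i b_i^d = z_{α,i}`, `(d − |α|) t^d = v_α(z)` and `d t^{d−|α|} ∏ |b_i|^{α_i} = |p_α|`, and
since `p_α x^α` is not a square, the signs of the `b_i` can be chosen so that
`d ∏_j v_j^{β_j} = −p_α x^α`. Finally, Hurwitz's inductive proof of AM–GM writes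
`∑_j u_j^{2M} − 2M ∏_j u_j` as a sum of squares of binomials whenever the `u_j` are monomials.
-/

open MvPolynomial Finset

noncomputable section

/-- `Finset.filter` with classical decidability. -/
def pfilter {β : Type*} (s : Finset β) (q : β → Prop) : Finset β :=
  @Finset.filter β q (fun _ => Classical.propDecidable _) s

/-- `|α| := α₁ + ⋯ + αₙ` for a multi-index `α`. -/
def adeg {n : ℕ} (α : Fin n →₀ ℕ) : ℕ := ∑ i, α i

/-- `Ω(p) := {α : |α| ≤ d, p_α ≠ 0, α ∉ {0, ε₁, …, εₙ}}`. -/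
def OmegaSet {n : ℕ} (d : ℕ) (p : MvPolynomial (Fin n) ℝ) : Finset (Fin n →₀ ℕ) :=
  pfilter p.support (fun α => adeg α ≤ d ∧ α ≠ 0 ∧ ∀ i, α ≠ Finsupp.single i d)

/-- `Δ(p) := {α ∈ Ω(p) : p_α x^α is not a square}`. -/
def DelSet {n : ℕ} (d : ℕ) (p : MvPolynomial (Fin n) ℝ) : Finset (Fin n →₀ ℕ) :=
  pfilter (OmegaSet d p)
    (fun α => ¬ IsSquare ((monomial α (p.coeff α)) : MvPolynomial (Fin n) ℝ))

/-- Feasibility for program (lw) for `p`. -/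
def LwFeas {n : ℕ} (d : ℕ) (p : MvPolynomial (Fin n) ℝ)
    (z : (Fin n →₀ ℕ) → Fin n → ℝ) : Prop :=
  (∀ α ∈ DelSet d p, ∀ i, 0 ≤ z α i ∧ (z α i = 0 ↔ α i = 0)) ∧
  (∀ i, ∑ α ∈ DelSet d p, z α i ≤ p.coeff (Finsupp.single i d)) ∧
  (∀ α ∈ DelSet d p, adeg α = d →
    ∏ i, (z α i / (α i : ℝ)) ^ (α i) = (p.coeff α / (d : ℝ)) ^ d)

/-- The objective function `v` of program (lw). -/
def lwObj {n : ℕ} (d : ℕ) (p : MvPolynomial (Fin n) ℝ)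
    (z : (Fin n →₀ ℕ) → Fin n → ℝ) : ℝ :=
  ∑ α ∈ pfilter (DelSet d p) (fun α => adeg α < d),
    ((d : ℝ) - (adeg α : ℝ)) *
      (((p.coeff α / (d : ℝ)) ^ d * ∏ i, ((α i : ℝ) / z α i) ^ (α i)) ^
        ((1 : ℝ) / ((d : ℝ) - (adeg α : ℝ))))

/-- `ρ(p) ∈ [0,∞]`, the infimum of `v` over the feasible set (`⊤` if infeasible). -/
def lwRho {n : ℕ} (d : ℕ) (p : MvPolynomial (Fin n) ℝ) : EReal :=
  sInf ((fun z => ((lwObj d p z : ℝ) : EReal)) '' {z | LwFeas d p z})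

/-- `p_gp := p(0) − ρ(p) ∈ ℝ ∪ {−∞}`. -/
def lwGp {n : ℕ} (d : ℕ) (p : MvPolynomial (Fin n) ℝ) : EReal :=
  ((eval (0 : Fin n → ℝ) p : ℝ) : EReal) - lwRho d p

/-- `G(λ) := f − ∑ⱼ λⱼ gⱼ`. -/
def polyG {n m : ℕ} (f : MvPolynomial (Fin n) ℝ) (g : Fin m → MvPolynomial (Fin n) ℝ)
    (lam : Fin m → ℝ) : MvPolynomial (Fin n) ℝ :=
  f - ∑ j, C (lam j) * g j

/-- `s(f,g) := sup{G(λ)_gp : λ ∈ [0,∞)^m}`. -/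
def sBound {n m : ℕ} (d : ℕ) (f : MvPolynomial (Fin n) ℝ)
    (g : Fin m → MvPolynomial (Fin n) ℝ) : EReal :=
  sSup ((fun lam => lwGp d (polyG f g lam)) '' {lam : Fin m → ℝ | ∀ j, 0 ≤ lam j})

section BinomialSumSq

variable {σ : Type*}

variable (σ) in
def monomials : Submonoid (MvPolynomial σ ℝ) where
  carrier := {q | ∃ s a, monomial s a = q}
  mul_mem' := by
    rintro _ _ ⟨s, a, rfl⟩ ⟨t, b, rfl⟩
    exact ⟨s + t, a * b, monomial_mul.symm⟩
  one_mem' := ⟨0, 1, rfl⟩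

theorem monomial_mem_monomials (s : σ →₀ ℕ) (a : ℝ) : monomial s a ∈ monomials σ :=
  ⟨s, a, rfl⟩

theorem C_mem_monomials (a : ℝ) : (C a : MvPolynomial σ ℝ) ∈ monomials σ :=
  monomial_mem_monomials 0 a

theorem X_mem_monomials (i : σ) : (X i : MvPolynomial σ ℝ) ∈ monomials σ :=
  monomial_mem_monomials _ 1

theorem neg_mem_monomials {u : MvPolynomial σ ℝ} (hu : u ∈ monomials σ) : -u ∈ monomials σ := by
  obtain ⟨s, a, rfl⟩ := hu
  exact ⟨s, -a, map_neg _ _⟩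

theorem card_support_add_le_two {u v : MvPolynomial σ ℝ} (hu : u ∈ monomials σ)
    (hv : v ∈ monomials σ) : (u + v).support.card ≤ 2 := by
  classical
  obtain ⟨s, a, rfl⟩ := hu
  obtain ⟨t, b, rfl⟩ := hv
  calc (monomial s a + monomial t b).support.card
      ≤ ((monomial s a).support ∪ (monomial t b).support).card := card_le_card support_add
    _ ≤ ({s} ∪ {t} : Finset _).card :=
        card_le_card (union_subset_union support_monomial_subset support_monomial_subset)
    _ ≤ 2 := card_union_le _ _

variable (σ) in
def binomialSumSq : AddSubmonoid (MvPolynomial σ ℝ) :=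
  AddSubmonoid.closure {q | ∃ u ∈ monomials σ, ∃ v ∈ monomials σ, (u + v) ^ 2 = q}

theorem sq_add_mem_binomialSumSq {u v : MvPolynomial σ ℝ} (hu : u ∈ monomials σ)
    (hv : v ∈ monomials σ) : (u + v) ^ 2 ∈ binomialSumSq σ :=
  AddSubmonoid.subset_closure ⟨u, hu, v, hv, rfl⟩

theorem sq_sub_mem_binomialSumSq {u v : MvPolynomial σ ℝ} (hu : u ∈ monomials σ)
    (hv : v ∈ monomials σ) : (u - v) ^ 2 ∈ binomialSumSq σ :=
  sub_eq_add_neg u v ▸ sq_add_mem_binomialSumSq hu (neg_mem_monomials hv)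

theorem sq_mem_binomialSumSq {u : MvPolynomial σ ℝ} (hu : u ∈ monomials σ) :
    u ^ 2 ∈ binomialSumSq σ := by
  simpa using sq_add_mem_binomialSumSq hu (C_mem_monomials 0)

theorem exists_monomial_sq_eq {s : σ →₀ ℕ} {a : ℝ} (ha : 0 ≤ a) (hs : ∀ i, Even (s i)) :
    ∃ u ∈ monomials σ, monomial s a = u ^ 2 := by
  obtain ⟨t, rfl⟩ : ∃ t, s = t + t :=
    ⟨s.mapRange (· / 2) rfl, Finsupp.ext fun i => by obtain ⟨k, hk⟩ := hs i; simp [hk]; omega⟩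
  exact ⟨_, monomial_mem_monomials t √a, by rw [sq, monomial_mul, Real.mul_self_sqrt ha]⟩

theorem monomial_mem_binomialSumSq {s : σ →₀ ℕ} {a : ℝ} (ha : 0 ≤ a) (hs : ∀ i, Even (s i)) :
    monomial s a ∈ binomialSumSq σ := by
  obtain ⟨u, hu, h⟩ := exists_monomial_sq_eq ha hs
  exact h ▸ sq_mem_binomialSumSq hu

theorem map_mem_binomialSumSq (f : MvPolynomial σ ℝ →+ MvPolynomial σ ℝ)
    (hf : ∀ u ∈ monomials σ, ∀ v ∈ monomials σ, f ((u + v) ^ 2) ∈ binomialSumSq σ)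
    {p : MvPolynomial σ ℝ} (hp : p ∈ binomialSumSq σ) : f p ∈ binomialSumSq σ := by
  have : binomialSumSq σ ≤ (binomialSumSq σ).comap f :=
    AddSubmonoid.closure_le.2 fun _ ⟨u, hu, v, hv, hq⟩ => hq ▸ hf u hu v hv
  exact this hp

theorem smul_mem_binomialSumSq {c : ℝ} (hc : 0 ≤ c) {p : MvPolynomial σ ℝ}
    (hp : p ∈ binomialSumSq σ) : c • p ∈ binomialSumSq σ := by
  refine map_mem_binomialSumSq (DistribSMul.toAddMonoidHom _ c) (fun u hu v hv => ?_) hp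
  have hsmul : ∀ w ∈ monomials σ, √c • w ∈ monomials σ := fun w hw => by
    rw [smul_eq_C_mul]; exact mul_mem (C_mem_monomials _) hw
  convert sq_add_mem_binomialSumSq (hsmul u hu) (hsmul v hv) using 1
  rw [DistribSMul.toAddMonoidHom_apply, ← smul_add, smul_pow, Real.sq_sqrt hc]

theorem sq_mul_mem_binomialSumSq {w p : MvPolynomial σ ℝ} (hw : w ∈ monomials σ)
    (hp : p ∈ binomialSumSq σ) : w ^ 2 * p ∈ binomialSumSq σ := by
  refine map_mem_binomialSumSq (AddMonoidHom.mulLeft (w ^ 2)) (fun u hu v hv => ?_) hp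
  convert sq_add_mem_binomialSumSq (mul_mem hw hu) (mul_mem hw hv) using 1
  rw [AddMonoidHom.coe_mulLeft]; ring

theorem eval_nonneg_of_mem_binomialSumSq {p : MvPolynomial σ ℝ} (hp : p ∈ binomialSumSq σ)
    (x : σ → ℝ) : 0 ≤ eval x p := by
  induction hp using AddSubmonoid.closure_induction with
  | mem _ h => obtain ⟨u, -, v, -, rfl⟩ := h; simpa using sq_nonneg _
  | zero => simp
  | add _ _ _ _ h₁ h₂ => simpa using add_nonneg h₁ h₂

theorem exists_sum_sq_of_mem_binomialSumSq {p : MvPolynomial σ ℝ} (hp : p ∈ binomialSumSq σ) :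
    ∃ (k : ℕ) (q : Fin k → MvPolynomial σ ℝ), (∀ t, (q t).support.card ≤ 2) ∧ p = ∑ t, q t ^ 2 := by
  induction hp using AddSubmonoid.closure_induction with
  | mem _ h =>
    obtain ⟨u, hu, v, hv, rfl⟩ := h
    exact ⟨1, fun _ => u + v, fun _ => card_support_add_le_two hu hv, by simp⟩
  | zero => exact ⟨0, finZeroElim, finZeroElim, by simp⟩
  | add _ _ _ _ h₁ h₂ =>
    obtain ⟨k₁, q₁, hq₁, rfl⟩ := h₁
    obtain ⟨k₂, q₂, hq₂, rfl⟩ := h₂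
    exact ⟨k₁ + k₂, Fin.append q₁ q₂, Fin.addCases (by simpa using hq₁) (by simpa using hq₂),
      by rw [Fin.sum_univ_add]; simp⟩

end BinomialSumSq

section Hurwitz

theorem hurwitz_identity {R : Type*} [CommRing R] (m : ℕ) (x : Fin (m + 1) → R) :
    2 * m * (∑ j, x j ^ (m + 1) - (m + 1) * ∏ j, x j) =
      ∑ i, ∑ k, (x i - x k) * (x i ^ m - x k ^ m) +
        2 * ∑ i, x i * (∑ j : Fin m, x (i.succAbove j) ^ m -
          m * ∏ j : Fin m, x (i.succAbove j)) := by
  have hpair : ∀ i k, (x i - x k) * (x i ^ m - x k ^ m) =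
      x i ^ (m + 1) + x k ^ (m + 1) - (x i * x k ^ m + x i ^ m * x k) := fun i k => by ring
  have hsucc : ∀ i, x i * (∑ j : Fin m, x (i.succAbove j) ^ m - m * ∏ j : Fin m, x (i.succAbove j)) =
      x i * ∑ j, x j ^ m - x i ^ (m + 1) - m * ∏ j, x j := fun i => by
    rw [Fin.sum_univ_succAbove (x · ^ m) i, Fin.prod_univ_succAbove x i]; ring
  simp only [hpair, hsucc, sum_sub_distrib, sum_add_distrib, sum_const, card_univ, Fintype.card_fin,
    ← mul_sum, ← sum_mul, nsmul_eq_mul]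
  push_cast
  ring

theorem sub_mul_pow_sub_pow_eq_sum_sq {R : Type*} [CommRing R] (u v : R) (m : ℕ) :
    (u ^ 2 - v ^ 2) * ((u ^ 2) ^ m - (v ^ 2) ^ m) =
      ∑ t ∈ range m,
        (u ^ 2 * (u ^ t * v ^ (m - 1 - t)) - v ^ 2 * (u ^ t * v ^ (m - 1 - t))) ^ 2 := by
  rw [← geom_sum₂_mul (u ^ 2) (v ^ 2) m, mul_comm, sum_mul, sum_mul]
  refine sum_congr rfl fun t _ => ?_
  ring

variable {σ : Type*}

theorem sum_sq_pow_sub_mem_binomialSumSq (N : ℕ) (μ : Fin N → MvPolynomial σ ℝ)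
    (hμ : ∀ j, μ j ∈ monomials σ) : ∑ j, (μ j ^ 2) ^ N - N * ∏ j, μ j ^ 2 ∈ binomialSumSq σ := by
  induction N with
  | zero => simp
  | succ m ih =>
    rcases Nat.eq_zero_or_pos m with rfl | hm
    · simp
    set x := fun j => μ j ^ 2
    have hpairs : ∑ i, ∑ k, (x i - x k) * (x i ^ m - x k ^ m) ∈ binomialSumSq σ := by
      refine sum_mem fun i _ => sum_mem fun k _ => ?_
      rw [sub_mul_pow_sub_pow_eq_sum_sq]
      have hw : ∀ t, μ i ^ t * μ k ^ (m - 1 - t) ∈ monomials σ := fun t =>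
        mul_mem (pow_mem (hμ i) _) (pow_mem (hμ k) _)
      exact sum_mem fun t _ => sq_sub_mem_binomialSumSq (mul_mem (pow_mem (hμ i) 2) (hw t))
        (mul_mem (pow_mem (hμ k) 2) (hw t))
    have hrest : 2 * ∑ i, x i * (∑ j : Fin m, x (i.succAbove j) ^ m -
        m * ∏ j : Fin m, x (i.succAbove j)) ∈ binomialSumSq σ := by
      rw [two_mul]
      have : ∑ i, x i * (∑ j : Fin m, x (i.succAbove j) ^ m -
          m * ∏ j : Fin m, x (i.succAbove j)) ∈ binomialSumSq σ :=
        sum_mem fun i _ => sq_mul_mem_binomialSumSq (hμ i) (ih _ fun j => hμ (i.succAbove j))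
      exact add_mem this this
    -- by `hurwitz_identity`, `2m` times the goal is `hpairs + hrest`
    have h2m : (2 * m : ℝ) ≠ 0 := by positivity
    rw [← inv_smul_smul₀ h2m (_ - _)]
    refine smul_mem_binomialSumSq (by positivity) ?_
    convert add_mem hpairs hrest using 1
    rw [← hurwitz_identity, smul_eq_C_mul, map_mul, map_ofNat, map_natCast]
    push_cast
    rfl

end Hurwitz

section AMGM

variable {σ ι : Type*} [Fintype ι] {d : ℕ}

theorem sum_pow_sub_mul_prod_mem_binomialSumSq (hd : Even d) (hcard : Fintype.card ι = d)
    (u : ι → MvPolynomial σ ℝ) (hu : ∀ j, u j ∈ monomials σ) :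
    ∑ j, u j ^ d - d * ∏ j, u j ∈ binomialSumSq σ := by
  obtain ⟨M, rfl⟩ := hd
  let e : Fin M ⊕ Fin M ≃ ι := finSumFinEquiv.trans (Fintype.equivFinOfCardEq hcard).symm
  set a := fun j => u (e (.inl j))
  set b := fun j => u (e (.inr j))
  have key : ∑ j, u j ^ (M + M) - ↑(M + M) * ∏ j, u j =
      (∑ j, (a j ^ 2) ^ M - M * ∏ j, a j ^ 2) + (∑ j, (b j ^ 2) ^ M - M * ∏ j, b j ^ 2) +
        M • (∏ j, a j - ∏ j, b j) ^ 2 := by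
    rw [← e.sum_comp, ← e.prod_comp, Fintype.sum_sum_type, Fintype.prod_sum_type]
    simp only [prod_pow, ← pow_mul, nsmul_eq_mul, a, b]
    push_cast
    ring_nf
  rw [key]
  have hprod : ∀ f : Fin M → MvPolynomial σ ℝ, (∀ j, f j ∈ monomials σ) → ∏ j, f j ∈ monomials σ :=
    fun f hf => prod_mem fun j _ => hf j
  exact add_mem (add_mem (sum_sq_pow_sub_mem_binomialSumSq M a fun j => hu _)
    (sum_sq_pow_sub_mem_binomialSumSq M b fun j => hu _))
    (nsmul_mem (sq_sub_mem_binomialSumSq (hprod a fun j => hu _) (hprod b fun j => hu _)) M)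

theorem sum_mul_pow_sub_mul_prod_pow_mem_binomialSumSq (hd : Even d) (β : ι → ℕ)
    (hβ : ∑ j, β j = d) (v : ι → MvPolynomial σ ℝ) (hv : ∀ j, v j ∈ monomials σ) :
    ∑ j, β j * v j ^ d - d * ∏ j, v j ^ β j ∈ binomialSumSq σ := by
  have hcard : Fintype.card ((j : ι) × Fin (β j)) = d := by simpa using hβ
  convert sum_pow_sub_mul_prod_mem_binomialSumSq hd hcard (fun s => v s.1) (fun s => hv s.1)
    using 3 <;> simp [← univ_sigma_univ, sum_sigma, prod_sigma]

end AMGM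

section Monomials

variable {σ : Type*} [Fintype σ]

theorem nonneg_and_even_or_exists_sign (s : σ →₀ ℕ) (c : ℝ) :
    (0 ≤ c ∧ ∀ i, Even (s i)) ∨
      ∃ y : σ → ℝ, (∀ i, y i = 1 ∨ y i = -1) ∧ |c| * ∏ i, y i ^ s i = -c := by
  classical
  by_cases h : 0 ≤ c ∧ ∀ i, Even (s i)
  · exact .inl h
  right
  rcases le_or_gt c 0 with hc | hc
  · exact ⟨1, fun _ => .inl rfl, by simp [abs_of_nonpos hc]⟩
  · obtain ⟨i₀, hi₀⟩ : ∃ i₀, Odd (s i₀) := by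
      simpa [Nat.not_even_iff_odd] using fun h' => h ⟨hc.le, h'⟩
    refine ⟨fun i => if i = i₀ then -1 else 1, fun i => by dsimp only; split_ifs <;> simp, ?_⟩
    rw [Fintype.prod_eq_single i₀ fun j hj => by simp [hj]]
    simp [hi₀.neg_one_pow, abs_of_pos hc]

theorem monomial_mem_binomialSumSq_of_isSquare {s : σ →₀ ℕ} {c : ℝ}
    (hsq : IsSquare (monomial s c)) (hc : c ≠ 0) : monomial s c ∈ binomialSumSq σ := by
  rcases nonneg_and_even_or_exists_sign s c with ⟨hc0, hs⟩ | ⟨y, -, hy⟩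
  · exact monomial_mem_binomialSumSq hc0 hs
  · obtain ⟨q, hq⟩ := hsq
    have hval : 0 ≤ c * ∏ i, y i ^ s i := by
      have := congrArg (eval y) hq
      rw [eval_monomial, Finsupp.prod_fintype _ _ fun _ => pow_zero _, eval_mul] at this
      exact this ▸ mul_self_nonneg _
    have : c * (|c| * ∏ i, y i ^ s i) = -(c * c) := by rw [hy]; ring
    nlinarith [mul_nonneg (abs_nonneg c) hval, mul_self_pos.2 hc]

end Monomials

section LwSummand

variable {σ : Type*} [Fintype σ] {d : ℕ}

def lwRoot (d : ℕ) (α : σ →₀ ℕ) (c : ℝ) (z : σ → ℝ) : ℝ :=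
  ((c / (d : ℝ)) ^ d * ∏ i, ((α i : ℝ) / z i) ^ (α i)) ^
    ((1 : ℝ) / ((d : ℝ) - ((∑ i, α i : ℕ) : ℝ)))

def lwTerm (d : ℕ) (α : σ →₀ ℕ) (c : ℝ) (z : σ → ℝ) : ℝ :=
  ((d : ℝ) - ((∑ i, α i : ℕ) : ℝ)) * lwRoot d α c z

section Feasible

variable {α : σ →₀ ℕ} {c : ℝ} {z : σ → ℝ} (hd : Even d) (hα : ∑ i, α i ≤ d)
  (hz0 : ∀ i, 0 ≤ z i) (hz : ∀ i, z i = 0 ↔ α i = 0)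
  (hcon : ∑ i, α i = d → ∏ i, (z i / α i) ^ α i = (c / d) ^ d)
include hd hα hz0 hz hcon

theorem lwRoot_pow_mul_prod :
    lwRoot d α c z ^ (d - ∑ i, α i) * ∏ i, (z i / α i) ^ α i = (c / d) ^ d := by
  rcases Nat.eq_zero_or_pos (d - ∑ i, α i) with hr0 | hr0
  · rw [hr0, pow_zero, one_mul]
    exact hcon (by omega)
  have hinv : (∏ i, ((α i : ℝ) / z i) ^ α i) * ∏ i, (z i / α i) ^ α i = 1 := by
    rw [← prod_mul_distrib]
    refine prod_eq_one fun i _ => ?_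
    rcases eq_or_ne (α i) 0 with h | h
    · simp [h]
    · rw [← mul_pow, div_mul_div_cancel₀', div_self, one_pow] <;> simp [h, (hz i).not.2 h]
  have hbase : 0 ≤ (c / d) ^ d * ∏ i, ((α i : ℝ) / z i) ^ α i := mul_nonneg (hd.pow_nonneg _)
    (prod_nonneg fun i _ => pow_nonneg (div_nonneg (Nat.cast_nonneg _) (hz0 i)) _)
  rw [lwRoot, one_div, ← Nat.cast_sub hα, Real.rpow_inv_natCast_pow hbase hr0.ne', mul_assoc, hinv,
    mul_one]

theorem exists_amgm_coefficients (hd0 : d ≠ 0) :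
    ∃ (t : ℝ) (b : σ → ℝ), ((d - ∑ i, α i : ℕ) : ℝ) * t ^ d = lwTerm d α c z ∧
      (∀ i, α i * b i ^ d = z i) ∧ d * (t ^ (d - ∑ i, α i) * ∏ i, b i ^ α i) = |c| := by
  have hs : 0 ≤ lwRoot d α c z := Real.rpow_nonneg (mul_nonneg (hd.pow_nonneg _)
    (prod_nonneg fun i _ => pow_nonneg (div_nonneg (Nat.cast_nonneg _) (hz0 i)) _)) _
  have hq : ∀ i, 0 ≤ z i / α i := fun i => div_nonneg (hz0 i) (Nat.cast_nonneg _)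
  have hroot : ∀ x : ℝ, 0 ≤ x → ∀ k, ((x ^ (d : ℝ)⁻¹) ^ k) ^ d = x ^ k := fun x hx k => by
    rw [← pow_mul, mul_comm, pow_mul, Real.rpow_inv_natCast_pow hx hd0]
  refine ⟨lwRoot d α c z ^ (d : ℝ)⁻¹, fun i => (z i / α i) ^ (d : ℝ)⁻¹, ?_, fun i => ?_, ?_⟩
  · rw [Real.rpow_inv_natCast_pow hs hd0, lwTerm, Nat.cast_sub hα]
  · rw [Real.rpow_inv_natCast_pow (hq i) hd0]
    rcases eq_or_ne (α i) 0 with h | h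
    · simp [h, (hz i).2 h]
    · field_simp
  · set K := (lwRoot d α c z ^ (d : ℝ)⁻¹) ^ (d - ∑ i, α i) * ∏ i, ((z i / α i) ^ (d : ℝ)⁻¹) ^ α i
    have hK : 0 ≤ K := mul_nonneg (pow_nonneg (Real.rpow_nonneg hs _) _)
      (prod_nonneg fun i _ => pow_nonneg (Real.rpow_nonneg (hq i) _) _)
    have hKd : K ^ d = (|c| / d) ^ d := by
      simp only [K, mul_pow, ← prod_pow, hroot _ hs, hroot _ (hq _)]
      rw [lwRoot_pow_mul_prod hd hα hz0 hz hcon, div_pow, div_pow, hd.pow_abs]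
    rw [(pow_left_inj₀ hK (div_nonneg (abs_nonneg c) (Nat.cast_nonneg d)) hd0).1 hKd]
    field_simp

end Feasible

theorem C_add_sum_monomial_sub_monomial_mem_binomialSumSq (hd : Even d) {r : ℕ} {α : σ →₀ ℕ}
    (hα : r + ∑ i, α i = d) (t : ℝ) (b : σ → ℝ) :
    C (r * t ^ d) + ∑ i, monomial (Finsupp.single i d) (α i * b i ^ d) -
      monomial α (d * (t ^ r * ∏ i, b i ^ α i)) ∈ binomialSumSq σ := by
  have hv : ∀ o : Option σ, o.elim (C t) (fun i => C (b i) * X i) ∈ monomials σ := fun o => by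
    cases o with
    | none => exact C_mem_monomials t
    | some i => exact mul_mem (C_mem_monomials _) (X_mem_monomials i)
  have := sum_mul_pow_sub_mul_prod_pow_mem_binomialSumSq hd (fun o => o.elim r (α ·))
    (by rwa [Fintype.sum_option]) _ hv
  convert this using 2
  · simp [Fintype.sum_option, ← C_mul_X_pow_eq_monomial, mul_pow, mul_assoc]
  · simp [Fintype.prod_option, monomial_eq, Finsupp.prod_fintype, mul_pow, prod_mul_distrib]
    ring

theorem monomial_add_sum_monomial_add_C_lwTerm_mem_binomialSumSq (hd : Even d) (hd0 : d ≠ 0)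
    {α : σ →₀ ℕ} (hα : ∑ i, α i ≤ d) {c : ℝ} (hsq : ¬IsSquare (monomial α c)) {z : σ → ℝ}
    (hz0 : ∀ i, 0 ≤ z i) (hz : ∀ i, z i = 0 ↔ α i = 0)
    (hcon : ∑ i, α i = d → ∏ i, (z i / α i) ^ α i = (c / d) ^ d) :
    monomial α c + ∑ i, monomial (Finsupp.single i d) (z i) + C (lwTerm d α c z) ∈
      binomialSumSq σ := by
  obtain ⟨y, hy1, hy⟩ := (nonneg_and_even_or_exists_sign α c).resolve_left fun ⟨hc, hs⟩ => by
    obtain ⟨u, -, hu⟩ := exists_monomial_sq_eq hc hs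
    exact hsq ⟨u, hu.trans (sq u)⟩
  obtain ⟨t, b, ht, hb, htb⟩ := exists_amgm_coefficients hd hα hz0 hz hcon hd0
  have hyb : ∀ i, (y i * b i) ^ d = b i ^ d := fun i => by
    rcases hy1 i with h | h <;> simp [h, hd.neg_pow]
  have hcoef : d * (t ^ (d - ∑ i, α i) * ∏ i, (y i * b i) ^ α i) = -c := by
    rw [← hy, ← htb]
    simp only [mul_pow, prod_mul_distrib]
    ring
  have := C_add_sum_monomial_sub_monomial_mem_binomialSumSq hd (Nat.sub_add_cancel hα) t
    (fun i => y i * b i)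
  simp only [hyb, hb, hcoef, ht, map_neg, sub_neg_eq_add] at this
  convert this using 1
  ring

end LwSummand

theorem mem_pfilter {β : Type*} {s : Finset β} {q : β → Prop} {a : β} :
    a ∈ pfilter s q ↔ a ∈ s ∧ q a := by
  simp [pfilter]

section Program

variable {n d : ℕ} {p : MvPolynomial (Fin n) ℝ}

theorem mem_omegaSet {α : Fin n →₀ ℕ} :
    α ∈ OmegaSet d p ↔ p.coeff α ≠ 0 ∧ adeg α ≤ d ∧ α ≠ 0 ∧ ∀ i, α ≠ Finsupp.single i d := by
  simp [OmegaSet, pfilter]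

theorem mem_delSet {α : Fin n →₀ ℕ} :
    α ∈ DelSet d p ↔ α ∈ OmegaSet d p ∧ ¬IsSquare (monomial α (p.coeff α)) := by
  simp [DelSet, pfilter]

theorem delSet_subset_omegaSet : DelSet d p ⊆ OmegaSet d p := fun _ h => (mem_delSet.1 h).1

theorem eq_C_add_sum_monomial_add_sum_omegaSet (hd0 : d ≠ 0) (hp : p.totalDegree ≤ d) :
    p = C (p.coeff 0) + ∑ i, monomial (Finsupp.single i d) (p.coeff (Finsupp.single i d)) +
      ∑ β ∈ OmegaSet d p, monomial β (p.coeff β) := by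
  have hsingle : ∀ i j : Fin n, Finsupp.single i d = Finsupp.single j d ↔ i = j := fun i j =>
    Finsupp.single_left_inj hd0
  ext γ
  simp only [coeff_add, coeff_C, coeff_sum, coeff_monomial, sum_ite_eq', mem_omegaSet]
  by_cases h0 : γ = 0
  · subst h0
    simp [Ne.symm, hd0]
  by_cases hs : ∃ j, γ = Finsupp.single j d
  · obtain ⟨j, rfl⟩ := hs
    simp [hsingle, Ne.symm h0]
  push Not at hs
  have hle : p.coeff γ ≠ 0 → adeg γ ≤ d := fun h => by
    have := le_totalDegree (mem_support_iff.2 h)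
    rw [Finsupp.sum_fintype _ _ fun _ => rfl] at this
    exact this.trans hp
  by_cases hγ : p.coeff γ = 0 <;> simp [Ne.symm h0, fun i => (hs i).symm, hγ, hle, h0, hs]

theorem lwObj_eq_sum_delSet (z : (Fin n →₀ ℕ) → Fin n → ℝ) :
    lwObj d p z = ∑ α ∈ DelSet d p, lwTerm d α (p.coeff α) (z α) := by
  show ∑ α ∈ pfilter _ _, lwTerm d α (p.coeff α) (z α) = _
  refine sum_subset (fun _ h => (mem_pfilter.1 h).1) fun α hα hα' => ?_
  have hle := (mem_omegaSet.1 (delSet_subset_omegaSet hα)).2.1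
  have : adeg α = d := by
    by_contra h
    exact hα' (mem_pfilter.2 ⟨hα, lt_of_le_of_ne hle h⟩)
  rw [lwTerm, ← adeg, this, sub_self, zero_mul]

theorem sub_C_eval_zero_add_C_lwObj_mem_binomialSumSq (hd : Even d) (hd0 : d ≠ 0)
    (hp : p.totalDegree ≤ d) {z : (Fin n →₀ ℕ) → Fin n → ℝ} (hz : LwFeas d p z) :
    p - C (eval 0 p) + C (lwObj d p z) ∈ binomialSumSq (Fin n) := by
  obtain ⟨hz0, hbudget, hcon⟩ := hz
  have key : p - C (eval 0 p) + C (lwObj d p z) =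
      ∑ i, monomial (Finsupp.single i d)
          (p.coeff (Finsupp.single i d) - ∑ α ∈ DelSet d p, z α i) +
        ∑ β ∈ OmegaSet d p \ DelSet d p, monomial β (p.coeff β) +
        ∑ α ∈ DelSet d p, (monomial α (p.coeff α) + ∑ i, monomial (Finsupp.single i d) (z α i) +
          C (lwTerm d α (p.coeff α) (z α))) := by
    have hsplit := sum_sdiff (f := fun β => monomial β (p.coeff β))
      (delSet_subset_omegaSet (d := d) (p := p))
    nth_rewrite 1 [eq_C_add_sum_monomial_add_sum_omegaSet hd0 hp]
    rw [eval_zero, constantCoeff_eq, lwObj_eq_sum_delSet, ← hsplit]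
    simp only [map_sub, map_sum, sum_sub_distrib, sum_add_distrib]
    rw [sum_comm (s := DelSet d p)]
    ring
  rw [key]
  refine add_mem (add_mem (sum_mem fun i _ => ?_) (sum_mem fun β hβ => ?_)) (sum_mem fun α hα => ?_)
  · refine monomial_mem_binomialSumSq (sub_nonneg.2 (hbudget i)) fun j => ?_
    rw [Finsupp.single_apply]
    split_ifs
    exacts [hd, .zero]
  · obtain ⟨hΩ, hΔ⟩ := mem_sdiff.1 hβ
    exact monomial_mem_binomialSumSq_of_isSquare (by simpa [mem_delSet, hΩ] using hΔ)
      (mem_omegaSet.1 hΩ).1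
  · obtain ⟨hΩ, hsq⟩ := mem_delSet.1 hα
    exact monomial_add_sum_monomial_add_C_lwTerm_mem_binomialSumSq hd hd0
      (mem_omegaSet.1 hΩ).2.1 hsq (fun i => (hz0 α hα i).1) (fun i => (hz0 α hα i).2) (hcon α hα)

theorem lwGp_le {c : ℝ} (h : ∀ z, LwFeas d p z → eval 0 p - lwObj d p z ≤ c) :
    lwGp d p ≤ c := by
  have hρ : ((eval 0 p - c : ℝ) : EReal) ≤ lwRho d p :=
    le_sInf <| by
      rintro _ ⟨z, hz, rfl⟩
      exact EReal.coe_le_coe_iff.2 (by linarith [h z hz])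
  calc lwGp d p ≤ ((eval 0 p : ℝ) : EReal) - ((eval 0 p - c : ℝ) : EReal) :=
        EReal.sub_le_sub le_rfl hρ
    _ = c := by rw [← EReal.coe_sub, sub_sub_cancel]

end Program

theorem stmt0_general {n : ℕ} (d : ℕ) (hd2 : 2 ≤ d) (hde : Even d)
    (p : MvPolynomial (Fin n) ℝ) (hp : p.totalDegree ≤ d)
    (z : (Fin n →₀ ℕ) → Fin n → ℝ) (hz : LwFeas d p z) :
    (∃ (k : ℕ) (q : Fin k → MvPolynomial (Fin n) ℝ),
        (∀ t, (q t).support.card ≤ 2) ∧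
        p - C (eval (0 : Fin n → ℝ) p) + C (lwObj d p z) = ∑ t, q t ^ 2) ∧
    (∀ x : Fin n → ℝ, eval (0 : Fin n → ℝ) p - lwObj d p z ≤ eval x p) ∧
    (∀ x : Fin n → ℝ, lwGp d p ≤ ((eval x p : ℝ) : EReal)) := by
  have hd0 : d ≠ 0 := by omega
  have hbound : ∀ z, LwFeas d p z → ∀ x, eval 0 p - lwObj d p z ≤ eval x p := fun z hz x => by
    have := eval_nonneg_of_mem_binomialSumSq
      (sub_C_eval_zero_add_C_lwObj_mem_binomialSumSq hde hd0 hp hz) x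
    simp only [eval_add, eval_sub, eval_C] at this
    linarith
  exact ⟨exists_sum_sq_of_mem_binomialSumSq
      (sub_C_eval_zero_add_C_lwObj_mem_binomialSumSq hde hd0 hp hz),
    hbound z hz, fun x => lwGp_le fun z hz => hbound z hz x⟩

/-- Ghasemi–Marshall, Theorem 3.1: for every feasible point `z` of program (lw) for `p`,
`p − p(0) + v(z)` is a sum of squares of binomials; in particular `p(0) − v(z)` is a lower
bound for `p` on `ℝⁿ`, and hence `p_gp = p(0) − ρ(p)` is a lower bound for `p` on `ℝⁿ`. -/
theorem stmt0 {n : ℕ} (hn : 1 ≤ n) (d : ℕ) (hd2 : 2 ≤ d) (hde : Even d)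
    (p : MvPolynomial (Fin n) ℝ) (hp : p.totalDegree ≤ d)
    (z : (Fin n →₀ ℕ) → Fin n → ℝ) (hz : LwFeas d p z) :
    (∃ (k : ℕ) (q : Fin k → MvPolynomial (Fin n) ℝ),
        (∀ t, (q t).support.card ≤ 2) ∧
        p - C (eval (0 : Fin n → ℝ) p) + C (lwObj d p z) = ∑ t, q t ^ 2) ∧
    (∀ x : Fin n → ℝ, eval (0 : Fin n → ℝ) p - lwObj d p z ≤ eval x p) ∧
    (∀ x : Fin n → ℝ, lwGp d p ≤ ((eval x p : ℝ) : EReal)) :=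
  stmt0_general d hd2 hde p hp z hz
end
end

section
/- Set g₀ := −f and assume (*): for each i = 1,…,n there exists j_i with 0 ≤ j_i ≤ m such that (g_{j_i})_{d,i} < 0 and (g_j)_{d,i} = 0 for all j > j_i. Then there exists a real matrix A = (a_{jk})_{j,k=0,…,m} with a_{jj} = 1 for all j, a_{jk} = 0 for k > j, and a_{jk} ≤ 0 for k < j (in particular a_{00} = 1 and a_{0k} = 0 for k ≠ 0) such that, with h_k := ∑_{j=0}^m a_{jk} g_j, for each i = 1,…,n one has: (h_{j_i})_{d,i} = (g_{j_i})_{d,i} < 0, (h_k)_{d,i} ≥ 0 for k < j_i, and (h_k)_{d,i} = 0 for k > j_i. In particular, for each i = 1,…,n exactly one of (h₀)_{d,i},…,(h_m)_{d,i} is strictly negative. -/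
open MvPolynomial Finset

noncomputable section

/-- `h_k := ∑_{j=0}^m a_{jk} g_j`. -/
def hpoly {n m : ℕ} (gext : Fin (m+1) → MvPolynomial (Fin n) ℝ)
    (A : Fin (m+1) → Fin (m+1) → ℝ) (k : Fin (m+1)) : MvPolynomial (Fin n) ℝ :=
  ∑ j, C (A j k) * gext j

/-!
Below the diagonal take `a_{jk} = -(x - 1) x^j`. If `j_i = t` and `k < t`, then
`(h_k)_{d,i}` is `∑_{j ≤ t} a_{jk} (g_j)_{d,i}`: the pivot term `(x - 1) x^t |(g_t)_{d,i}|`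
is at least `(x - 1) x^t ε`, where `ε` is the least absolute value of a negative coefficient
`(g_j)_{d,i}`, while the terms with `j < t` add up to at least
`-M ∑_{j<t} (x - 1) x^j = -M (x^t - 1)`, where `M` bounds all `|(g_j)_{d,i}|`.
Choosing `x` with `(x - 1) ε ≥ M` makes the sum nonnegative.
-/

section Unitriangular

variable {κ R : Type*} [Fintype κ] [LinearOrder κ] [CommSemiring R]

lemma sum_eq_add_sum_Iio_of_forall_gt_eq_zero [LocallyFiniteOrderBot κ] {M : Type*}
    [AddCommMonoid M] {v : κ → M} {t : κ} (hv : ∀ j, t < j → v j = 0) :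
    ∑ j, v j = v t + ∑ j ∈ Iio t, v j := by
  rw [← sum_subset (subset_univ (Iic t)) fun j _ hj => hv j (not_le.mp (mem_Iic.not.mp hj)),
    Iic_eq_cons_Iio, sum_cons]

variable {A : κ → κ → R} {v : κ → R} {t : κ}

lemma sum_mul_eq_of_unitriangular (hdiag : ∀ j, A j j = 1) (hup : ∀ j k, j < k → A j k = 0)
    (hv : ∀ j, t < j → v j = 0) : ∑ j, A j t * v j = v t := by
  rw [sum_eq_single t (fun j _ hj => ?_) (fun h => absurd (mem_univ t) h), hdiag, one_mul]
  rcases lt_or_gt_of_ne hj with h | h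
  · rw [hup j t h, zero_mul]
  · rw [hv j h, mul_zero]

lemma sum_mul_eq_zero_of_unitriangular (hup : ∀ j k, j < k → A j k = 0)
    (hv : ∀ j, t < j → v j = 0) {k : κ} (htk : t < k) : ∑ j, A j k * v j = 0 :=
  sum_eq_zero fun j _ => by
    rcases lt_or_ge j k with h | h
    · rw [hup j k h, zero_mul]
    · rw [hv j (htk.trans_le h), mul_zero]

end Unitriangular

section PivotMatrix

variable {N : ℕ}

def IsNegPivot (v : Fin N → ℝ) (t : Fin N) : Prop :=
  v t < 0 ∧ ∀ j, t < j → v j = 0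

def pivotMatrix (x : ℝ) (j k : Fin N) : ℝ :=
  if j = k then 1 else if k < j then -((x - 1) * x ^ (j : ℕ)) else 0

variable {x : ℝ}

lemma pivotMatrix_self (j : Fin N) : pivotMatrix x j j = 1 := if_pos rfl

lemma pivotMatrix_of_lt {j k : Fin N} (h : j < k) : pivotMatrix x j k = 0 := by
  rw [pivotMatrix, if_neg h.ne, if_neg h.not_gt]

lemma pivotMatrix_of_gt {j k : Fin N} (h : k < j) :
    pivotMatrix x j k = -((x - 1) * x ^ (j : ℕ)) := by
  rw [pivotMatrix, if_neg h.ne', if_pos h]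

lemma pivotMatrix_nonpos_of_gt (hx : 1 ≤ x) {j k : Fin N} (h : k < j) :
    pivotMatrix x j k ≤ 0 := by
  rw [pivotMatrix_of_gt h, neg_nonpos]
  exact mul_nonneg (sub_nonneg.mpr hx) (pow_nonneg (by linarith) _)

lemma abs_pivotMatrix_le (hx : 2 ≤ x) (j k : Fin N) :
    |pivotMatrix x j k| ≤ (x - 1) * x ^ (j : ℕ) := by
  have hpow : 1 ≤ x ^ (j : ℕ) := one_le_pow₀ (by linarith)
  have hweight : 1 ≤ (x - 1) * x ^ (j : ℕ) := by nlinarith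
  rcases lt_trichotomy j k with h | rfl | h
  · rw [pivotMatrix_of_lt h, abs_zero]
    linarith
  · rwa [pivotMatrix_self, abs_one]
  · rw [pivotMatrix_of_gt h, abs_neg, abs_of_nonneg (by linarith)]

lemma sum_Iio_sub_one_mul_pow (x : ℝ) (t : Fin N) :
    ∑ j ∈ Iio t, (x - 1) * x ^ (j : ℕ) = x ^ (t : ℕ) - 1 := by
  rw [← mul_sum, ← mul_geom_sum, ← Nat.Iio_eq_range, ← Fin.map_valEmbedding_Iio, sum_map]
  rfl

lemma pivotMatrix_sum_mul_nonneg {v : Fin N → ℝ} {t k : Fin N} {M ε : ℝ} (hx : 2 ≤ x)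
    (hM : ∀ j, |v j| ≤ M) (hε : ε ≤ -v t) (hxε : M ≤ (x - 1) * ε)
    (hv : ∀ j, t < j → v j = 0) (hkt : k < t) : 0 ≤ ∑ j, pivotMatrix x j k * v j := by
  have hpivot : M * x ^ (t : ℕ) ≤ pivotMatrix x t k * v t := by
    have hpow : 0 ≤ x ^ (t : ℕ) := by positivity
    calc M * x ^ (t : ℕ) ≤ (x - 1) * x ^ (t : ℕ) * ε := by nlinarith
      _ ≤ (x - 1) * x ^ (t : ℕ) * -v t :=
        mul_le_mul_of_nonneg_left hε (mul_nonneg (by linarith) hpow)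
      _ = pivotMatrix x t k * v t := by rw [pivotMatrix_of_gt hkt]; ring
  have hrest : -(M * (x ^ (t : ℕ) - 1)) ≤ ∑ j ∈ Iio t, pivotMatrix x j k * v j := by
    rw [← sum_Iio_sub_one_mul_pow, mul_sum, ← sum_neg_distrib]
    refine sum_le_sum fun j _ => ?_
    calc -(M * ((x - 1) * x ^ (j : ℕ))) ≤ -|pivotMatrix x j k * v j| := by
          rw [abs_mul, mul_comm M]
          exact neg_le_neg <|
            mul_le_mul (abs_pivotMatrix_le hx j k) (hM j) (abs_nonneg _)
              ((abs_nonneg _).trans (abs_pivotMatrix_le hx j k))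
      _ ≤ pivotMatrix x j k * v j := neg_abs_le _
  have hM0 : 0 ≤ M := (abs_nonneg _).trans (hM t)
  rw [sum_eq_add_sum_Iio_of_forall_gt_eq_zero fun j hj => by rw [hv j hj, mul_zero]]
  linarith

lemma exists_pos_le_neg_of_lt_zero {α : Type*} [Finite α] (v : α → ℝ) :
    ∃ ε > 0, ∀ a, v a < 0 → ε ≤ -v a := by
  by_cases h : ∃ a, v a < 0
  · obtain ⟨a, ha⟩ := h
    have : Nonempty {a // v a < 0} := ⟨⟨a, ha⟩⟩
    obtain ⟨⟨b, hb⟩, hmax⟩ := Finite.exists_max fun a : {a // v a < 0} => v a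
    exact ⟨-v b, neg_pos.mpr hb, fun a ha => neg_le_neg (hmax ⟨a, ha⟩)⟩
  · push Not at h
    exact ⟨1, one_pos, fun a ha => absurd ha (h a).not_gt⟩

theorem exists_pivotMatrix_sum_mul_nonneg {ι : Type*} [Finite ι] (q : Fin N → ι → ℝ) :
    ∃ x, 2 ≤ x ∧ ∀ i t k, IsNegPivot (fun j => q j i) t → k < t →
      0 ≤ ∑ j, pivotMatrix x j k * q j i := by
  obtain ⟨M, hM⟩ := (Set.finite_range fun a : Fin N × ι => |q a.1 a.2|).bddAbove
  obtain ⟨ε, hε, hεq⟩ := exists_pos_le_neg_of_lt_zero fun a : Fin N × ι => q a.1 a.2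
  have hx : 2 ≤ 2 + |M| / ε := le_add_of_nonneg_right (by positivity)
  refine ⟨2 + |M| / ε, hx, fun i t k ht hkt => pivotMatrix_sum_mul_nonneg hx
    (fun j => hM ⟨(j, i), rfl⟩) (hεq (t, i) ht.1) ?_ ht.2 hkt⟩
  rw [show (2 + |M| / ε - 1) * ε = ε + |M| by field_simp; ring]
  linarith [le_abs_self M]

end PivotMatrix

lemma coeff_hpoly {n m : ℕ} (gext : Fin (m+1) → MvPolynomial (Fin n) ℝ)
    (A : Fin (m+1) → Fin (m+1) → ℝ) (k : Fin (m+1)) (α : Fin n →₀ ℕ) :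
    (hpoly gext A k).coeff α = ∑ j, A j k * (gext j).coeff α := by
  simp only [hpoly, coeff_sum, coeff_C_mul]

theorem stmt6_general {n m : ℕ} (d : ℕ)
    (gext : Fin (m+1) → MvPolynomial (Fin n) ℝ)
    (hstar : ∀ i : Fin n, ∃ j : Fin (m+1),
      (gext j).coeff (Finsupp.single i d) < 0 ∧
      ∀ j', j < j' → (gext j').coeff (Finsupp.single i d) = 0) :
    ∃ A : Fin (m+1) → Fin (m+1) → ℝ,
      (∀ j, A j j = 1) ∧ (∀ j k, j < k → A j k = 0) ∧ (∀ j k, k < j → A j k ≤ 0) ∧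
      (∀ i : Fin n, ∀ ji : Fin (m+1),
        ((gext ji).coeff (Finsupp.single i d) < 0 ∧
          ∀ j', ji < j' → (gext j').coeff (Finsupp.single i d) = 0) →
        (hpoly gext A ji).coeff (Finsupp.single i d) =
            (gext ji).coeff (Finsupp.single i d) ∧
        (hpoly gext A ji).coeff (Finsupp.single i d) < 0 ∧
        (∀ k, k < ji → 0 ≤ (hpoly gext A k).coeff (Finsupp.single i d)) ∧
        (∀ k, ji < k → (hpoly gext A k).coeff (Finsupp.single i d) = 0)) ∧
      (∀ i : Fin n, ∃! k : Fin (m+1),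
        (hpoly gext A k).coeff (Finsupp.single i d) < 0) := by
  obtain ⟨x, hx, hnonneg⟩ :=
    exists_pivotMatrix_sum_mul_nonneg fun j (i : Fin n) => (gext j).coeff (Finsupp.single i d)
  have hcol : ∀ i t, IsNegPivot (fun j => (gext j).coeff (Finsupp.single i d)) t →
      (hpoly gext (pivotMatrix x) t).coeff (Finsupp.single i d) =
          (gext t).coeff (Finsupp.single i d) ∧
        (hpoly gext (pivotMatrix x) t).coeff (Finsupp.single i d) < 0 ∧
        (∀ k, k < t → 0 ≤ (hpoly gext (pivotMatrix x) k).coeff (Finsupp.single i d)) ∧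
        (∀ k, t < k → (hpoly gext (pivotMatrix x) k).coeff (Finsupp.single i d) = 0) := by
    intro i t ht
    simp only [coeff_hpoly]
    have hdiag := sum_mul_eq_of_unitriangular (A := pivotMatrix x) pivotMatrix_self
      (fun _ _ => pivotMatrix_of_lt) ht.2
    exact ⟨hdiag, hdiag ▸ ht.1, fun k hk => hnonneg i t k ht hk,
      fun k => sum_mul_eq_zero_of_unitriangular (fun _ _ => pivotMatrix_of_lt) ht.2⟩
  refine ⟨pivotMatrix x, pivotMatrix_self, fun _ _ => pivotMatrix_of_lt,
    fun _ _ => pivotMatrix_nonpos_of_gt (by linarith), hcol, fun i => ?_⟩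
  obtain ⟨t, ht⟩ := hstar i
  obtain ⟨-, hneg, hbelow, habove⟩ := hcol i t ht
  refine ⟨t, hneg, fun k hk => ?_⟩
  rcases lt_trichotomy k t with h | h | h
  · linarith [hbelow k h]
  · exact h
  · linarith [habove k h]

/-- Theorem (important special case, part 1): under (*) there is a canonically defined lower
triangular matrix `A` with unit diagonal and nonpositive entries below the diagonal such that,
for each `i`, `(h_{j_i})_{d,i} = (g_{j_i})_{d,i} < 0`, `(h_k)_{d,i} ≥ 0` for `k < j_i`, and
`(h_k)_{d,i} = 0` for `k > j_i`; in particular exactly one of `(h₀)_{d,i}, …, (h_m)_{d,i}`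
is strictly negative. -/
theorem stmt6 {n m : ℕ} (hn : 1 ≤ n) (d : ℕ)
    (f : MvPolynomial (Fin n) ℝ) (g : Fin m → MvPolynomial (Fin n) ℝ)
    (hd2 : 2 ≤ d) (hde : Even d) (hdf : f.totalDegree ≤ d)
    (hdg : ∀ j, (g j).totalDegree ≤ d)
    (hdLeast : ∀ d' : ℕ, Even d' → 2 ≤ d' → f.totalDegree ≤ d' →
      (∀ j, (g j).totalDegree ≤ d') → d ≤ d')
    (gext : Fin (m+1) → MvPolynomial (Fin n) ℝ) (hgext : gext = Fin.cons (-f) g)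
    (hstar : ∀ i : Fin n, ∃ j : Fin (m+1),
      (gext j).coeff (Finsupp.single i d) < 0 ∧
      ∀ j', j < j' → (gext j').coeff (Finsupp.single i d) = 0) :
    ∃ A : Fin (m+1) → Fin (m+1) → ℝ,
      (∀ j, A j j = 1) ∧ (∀ j k, j < k → A j k = 0) ∧ (∀ j k, k < j → A j k ≤ 0) ∧
      (∀ i : Fin n, ∀ ji : Fin (m+1),
        ((gext ji).coeff (Finsupp.single i d) < 0 ∧
          ∀ j', ji < j' → (gext j').coeff (Finsupp.single i d) = 0) →
        (hpoly gext A ji).coeff (Finsupp.single i d) =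
            (gext ji).coeff (Finsupp.single i d) ∧
        (hpoly gext A ji).coeff (Finsupp.single i d) < 0 ∧
        (∀ k, k < ji → 0 ≤ (hpoly gext A k).coeff (Finsupp.single i d)) ∧
        (∀ k, ji < k → (hpoly gext A k).coeff (Finsupp.single i d) = 0)) ∧
      (∀ i : Fin n, ∃! k : Fin (m+1),
        (hpoly gext A k).coeff (Finsupp.single i d) < 0) :=
  stmt6_general d gext hstar
end
end
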